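/- arXiv:0810.0952 — 6 statements merged into one kernel-verified Lean document; each statement's English description precedes it below -/
import Mathlib

section
/- For every w ∈ D_{∅,I₀} with w ≠ w_S w_{I₀}, there exists s ∈ S such that ℓ(sw) > ℓ(w) and s ∉ {w t w⁻¹ : t ∈ I₀}. -/
/-!
If every simple `s` with `ℓ(sw) > ℓ(w)` were `w t w⁻¹` for some `t ∈ I₀`, every simple
reflection would be a left descent of `w w_{I₀}`: those with `ℓ(sw) < ℓ(w)` because lengths add
along `w W_{I₀}`, the others because `s w w_{I₀} = w (t w_{I₀})` and `t` is a descent of `w_{I₀}`.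
An element with all simple reflections as left descents is the longest element; this needs the
exchange condition, which comes from Tits' reflection cocycle `η : W → (W → ℤˣ)`, the first
component of the lift of `s_i ↦ (δ_{s_i}, s_i)` to `(W → ℤˣ) ⋊ W` (with `W` acting by
conjugation of the argument). On a reduced word, `η(w, t) = -1` exactly when `t` is in its left
inversion sequence, and `η(uv, t) = η(u, t) η(v, u⁻¹tu)` lets a descent of `x` travel to
`v⁻¹x`, giving `ℓ(v) + ℓ(v⁻¹x) = ℓ(x)` for all `v`.
-/

open scoped Classical

namespace Okuyama

variable {B : Type} [Fintype B] [LinearOrder B]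
variable {W : Type} [Group W] [Fintype W]
variable {M : CoxeterMatrix B}

/-- The standard parabolic subgroup `W_I` generated by the simple reflections in `I`. -/
def parab (cs : CoxeterSystem M W) (I : Set B) : Subgroup W :=
  Subgroup.closure (cs.simple '' I)

/-- The right coset `W_I · w`. -/
def rcoset (cs : CoxeterSystem M W) (I : Set B) (w : W) : Set W :=
  {x | ∃ u ∈ parab cs I, x = u * w}

/-- `a` is a right coset of a standard parabolic subgroup. -/
def IsPCoset (cs : CoxeterSystem M W) (a : Set W) : Prop :=
  ∃ I : Set B, ∃ w : W, a = rcoset cs I w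

/-- The set `D_{I,J}` of `(I,J)`-reduced elements. -/
def D (cs : CoxeterSystem M W) (I J : Set B) : Set W :=
  {w | ∀ u ∈ parab cs I, ∀ v ∈ parab cs J,
      cs.length (u * w * v) = cs.length u + cs.length w + cs.length v}

/-- `S(a) = S ∩ a·a⁻¹`, as a set of indices of simple reflections. -/
def Sof (cs : CoxeterSystem M W) (a : Set W) : Set B :=
  {s | ∃ x ∈ a, ∃ y ∈ a, cs.simple s = x * y⁻¹}

/-- The degree `|S(a)|` of a coset. -/
noncomputable def deg (cs : CoxeterSystem M W) (a : Set W) : ℕ := (Sof cs a).ncard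

/-- `ℓ(a) = min {ℓ(x) : x ∈ a}`. -/
noncomputable def lof (cs : CoxeterSystem M W) (a : Set W) : ℕ := sInf (cs.length '' a)

/-- `a ∪ J := W_{J ∪ S(a)} · a`. -/
def cupJ (cs : CoxeterSystem M W) (a : Set W) (J : Set B) : Set W :=
  {x | ∃ u ∈ parab cs (J ∪ Sof cs a), ∃ y ∈ a, x = u * y}

/-- `a ∪ s := a ∪ {s}`. -/
def cup (cs : CoxeterSystem M W) (a : Set W) (s : B) : Set W := cupJ cs a {s}

/-- `n(I,s)`, the number of elements of `I` smaller than `s`. -/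
noncomputable def nls (I : Set B) (s : B) : ℕ := {t ∈ I | t < s}.ncard

/-- The differential of the Coxeter complex, on the free abelian group on all
subsets of `W` (the Coxeter complex itself is the span of the cosets). -/
noncomputable def diff (cs : CoxeterSystem M W) : (Set W →₀ ℤ) →ₗ[ℤ] (Set W →₀ ℤ) :=
  Finsupp.lift _ ℤ _ fun a : Set W =>
    ∑ s : B, if s ∈ Sof cs a then 0 else
      ((-1 : ℤ) ^ nls (Sof cs a) s) • Finsupp.single (cup cs a s) (1 : ℤ)

/-- `A(I₀)`: cosets meeting `D_{∅,I₀}`. -/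
def AI (cs : CoxeterSystem M W) (I₀ : Set B) : Set (Set W) :=
  {a | IsPCoset cs a ∧ (a ∩ D cs ∅ I₀).Nonempty}

/-- `A(I₀)⁺`: elements of `A(I₀)` not contained in `W_{I₀}`. -/
def AIplus (cs : CoxeterSystem M W) (I₀ : Set B) : Set (Set W) :=
  {a | a ∈ AI cs I₀ ∧ ¬ a ⊆ (parab cs I₀ : Set W)}

/-- `I₀(a) = I₀ ∩ a⁻¹·a`. -/
def I0of (cs : CoxeterSystem M W) (I₀ : Set B) (a : Set W) : Set B :=
  {s | s ∈ I₀ ∧ ∃ x ∈ a, ∃ y ∈ a, cs.simple s = x⁻¹ * y}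

/-- The canonical ℤ-basis vectors attached to a set `P` of cosets. -/
def gens (P : Set (Set W)) : Set (Set W →₀ ℤ) :=
  {f | ∃ a ∈ P, f = Finsupp.single a 1}

/-- The canonical ℤ-basis vectors of degree `i` attached to a set `P` of cosets. -/
def gensDeg (cs : CoxeterSystem M W) (P : Set (Set W)) (i : ℕ) : Set (Set W →₀ ℤ) :=
  {f | ∃ a ∈ P, deg cs a = i ∧ f = Finsupp.single a 1}

end Okuyama

open Okuyama

noncomputable section

namespace CoxeterSystem

variable {B W : Type*} [Group W] {M : CoxeterMatrix B} (cs : CoxeterSystem M W)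

def signConj (W : Type*) [Group W] : W →* MulAut (W → ℤˣ) :=
  mulAutArrow.comp (ConjAct.toConjAct : W ≃* ConjAct W).toMonoidHom

theorem signConj_apply (w : W) (f : W → ℤˣ) (t : W) :
    signConj W w f t = f (w⁻¹ * t * w) := by
  change f ((ConjAct.toConjAct w)⁻¹ • t) = _
  rw [ConjAct.smul_def]
  simp

theorem signConj_mulSingle (w c : W) :
    signConj W w (Pi.mulSingle c (-1)) = Pi.mulSingle (w * c * w⁻¹) (-1) := by
  funext t
  rw [signConj_apply]
  simp only [Pi.mulSingle_apply]
  congr 1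
  exact propext ⟨fun h => by rw [← h]; group, fun h => by rw [h]; group⟩

def cocycleGen (i : B) : (W → ℤˣ) ⋊[signConj W] W :=
  ⟨Pi.mulSingle (cs.simple i) (-1), cs.simple i⟩

theorem conj_pow_mul_simple (i j : B) (n l : ℕ) :
    (cs.simple i * cs.simple j) ^ n * ((cs.simple i * cs.simple j) ^ l * cs.simple i) *
        ((cs.simple i * cs.simple j) ^ n)⁻¹ =
      (cs.simple i * cs.simple j) ^ (l + 2 * n) * cs.simple i := by
  have h : SemiconjBy (cs.simple i) (cs.simple i * cs.simple j)⁻¹ (cs.simple i * cs.simple j) := by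
    simp [SemiconjBy, mul_assoc]
  rw [← inv_pow, mul_assoc, mul_assoc, (h.pow_right n).eq, two_mul, pow_add, pow_add]
  simp only [← mul_assoc, ← pow_add]
  congr 2
  omega

theorem cocycleGen_mul_pow (i j : B) (n : ℕ) :
    (cs.cocycleGen i * cs.cocycleGen j) ^ n =
      ⟨∏ l ∈ Finset.range (2 * n),
          Pi.mulSingle ((cs.simple i * cs.simple j) ^ l * cs.simple i) (-1),
        (cs.simple i * cs.simple j) ^ n⟩ := by
  induction n with
  | zero => exact SemidirectProduct.ext (by simp) (by simp)
  | succ n ih =>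
    have hgen : cs.cocycleGen i * cs.cocycleGen j =
        ⟨∏ l ∈ Finset.range 2, Pi.mulSingle ((cs.simple i * cs.simple j) ^ l * cs.simple i) (-1),
          cs.simple i * cs.simple j⟩ := by
      refine SemidirectProduct.ext ?_ rfl
      simp [cocycleGen, signConj_mulSingle, Finset.prod_range_succ, mul_assoc]
    rw [pow_succ, ih, hgen]
    refine SemidirectProduct.ext ?_ (pow_succ _ _).symm
    simp only [SemidirectProduct.mul_left, map_prod, signConj_mulSingle, conj_pow_mul_simple,
      Nat.mul_succ, Finset.prod_range_add]
    simp [add_comm]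

/-- At `n = M i j` the `2n` factors of `cocycleGen_mul_pow` are two copies of the same `n`, and
every element of `W → ℤˣ` squares to `1`. -/
theorem isLiftable_cocycleGen : M.IsLiftable cs.cocycleGen := by
  intro i j
  rw [cocycleGen_mul_pow, cs.simple_mul_simple_pow, two_mul, Finset.prod_range_add]
  refine SemidirectProduct.ext ?_ rfl
  simp only [pow_add, cs.simple_mul_simple_pow, one_mul, SemidirectProduct.one_left]
  exact funext fun t => Int.units_mul_self _

def reflCocycle (w : W) : W → ℤˣ := (cs.lift ⟨cs.cocycleGen, cs.isLiftable_cocycleGen⟩ w).left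

theorem lift_cocycleGen_right (w : W) :
    (cs.lift ⟨cs.cocycleGen, cs.isLiftable_cocycleGen⟩ w).right = w := by
  have h : SemidirectProduct.rightHom.comp (cs.lift ⟨cs.cocycleGen, cs.isLiftable_cocycleGen⟩) =
      MonoidHom.id W :=
    cs.ext_simple fun i => by simp [cocycleGen]
  exact DFunLike.congr_fun h w

theorem reflCocycle_mul (u v t : W) :
    cs.reflCocycle (u * v) t = cs.reflCocycle u t * cs.reflCocycle v (u⁻¹ * t * u) := by
  simp only [reflCocycle, map_mul, SemidirectProduct.mul_left, lift_cocycleGen_right, Pi.mul_apply,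
    signConj_apply]

theorem reflCocycle_simple (i : B) :
    cs.reflCocycle (cs.simple i) = Pi.mulSingle (cs.simple i) (-1) := by
  simp [reflCocycle, cocycleGen]

theorem reflCocycle_wordProd (ω : List B) (t : W) :
    cs.reflCocycle (cs.wordProd ω) t = (-1) ^ (cs.leftInvSeq ω).count t := by
  induction ω generalizing t with
  | nil => simp [reflCocycle]
  | cons i ω ih =>
    have hcount : (cs.leftInvSeq (i :: ω)).count t =
        (cs.leftInvSeq ω).count ((cs.simple i)⁻¹ * t * cs.simple i) +
          if cs.simple i = t then 1 else 0 := by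
      have hmap := List.count_map_of_injective (cs.leftInvSeq ω) _
        (MulAut.conj (cs.simple i)).injective ((cs.simple i)⁻¹ * t * cs.simple i)
      rw [show MulAut.conj (cs.simple i) ((cs.simple i)⁻¹ * t * cs.simple i) = t by
        simp [mul_assoc]] at hmap
      rw [show cs.leftInvSeq (i :: ω) =
          cs.simple i :: (cs.leftInvSeq ω).map (MulAut.conj (cs.simple i)) from rfl,
        List.count_cons, hmap]
      simp
    rw [cs.wordProd_cons, reflCocycle_mul, ih, reflCocycle_simple, hcount, pow_add, mul_comm]
    congr 1
    by_cases h : cs.simple i = t <;> simp [h, Ne.symm]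

theorem reflCocycle_wordProd_eq_neg_one_iff {ω : List B} (hω : cs.IsReduced ω) (t : W) :
    cs.reflCocycle (cs.wordProd ω) t = -1 ↔ t ∈ cs.leftInvSeq ω := by
  rw [reflCocycle_wordProd]
  by_cases ht : t ∈ cs.leftInvSeq ω
  · simp [ht, List.count_eq_one_of_mem hω.nodup_leftInvSeq ht]
  · simp [ht, List.count_eq_zero_of_not_mem ht, Units.ext_iff]

theorem isLeftInversion_of_reflCocycle_eq_neg_one {w t : W} (h : cs.reflCocycle w t = -1) :
    cs.IsLeftInversion w t := by
  obtain ⟨ω, hω, rfl⟩ := cs.exists_isReduced w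
  exact cs.isLeftInversion_of_mem_leftInvSeq hω
    ((cs.reflCocycle_wordProd_eq_neg_one_iff hω t).1 h)

theorem isLeftDescent_iff_reflCocycle_simple {w : W} {i : B} :
    cs.IsLeftDescent w i ↔ cs.reflCocycle w (cs.simple i) = -1 := by
  refine ⟨fun h => ?_, fun h => (cs.isLeftInversion_of_reflCocycle_eq_neg_one h).2⟩
  obtain ⟨υ, hυ, hsw⟩ := cs.exists_isReduced (cs.simple i * w)
  have hw : w = cs.wordProd (i :: υ) := by
    rw [cs.wordProd_cons, ← hsw, cs.simple_mul_simple_cancel_left]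
  have hred : cs.IsReduced (i :: υ) := by
    have := (cs.isLeftDescent_iff).1 h
    rw [IsReduced, ← hw, List.length_cons, ← hυ, ← hsw, this]
  rw [hw, cs.reflCocycle_wordProd_eq_neg_one_iff hred]
  exact List.mem_cons_self

theorem reflCocycle_simple_eq_one_of_not_isLeftDescent {w : W} {i : B}
    (h : ¬ cs.IsLeftDescent w i) : cs.reflCocycle w (cs.simple i) = 1 :=
  (Int.units_eq_one_or _).resolve_right (mt cs.isLeftDescent_iff_reflCocycle_simple.2 h)

theorem length_add_length_inv_mul_of_forall_isLeftDescent {x : W} (hx : ∀ i, cs.IsLeftDescent x i)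
    (v : W) : cs.length v + cs.length (v⁻¹ * x) = cs.length x := by
  obtain ⟨ω, hω, rfl⟩ := cs.exists_isReduced v
  induction ω with
  | nil => simp
  | cons i ω ih =>
    have hω' : cs.IsReduced ω := by simpa using hω.drop 1
    have hi : ¬ cs.IsLeftDescent (cs.wordProd ω) i := by
      rw [cs.not_isLeftDescent_iff, ← cs.wordProd_cons, hω, hω', List.length_cons]
    have hη : cs.reflCocycle ((cs.wordProd ω)⁻¹ * x)
        ((cs.wordProd ω)⁻¹ * cs.simple i * cs.wordProd ω) = -1 := by
      have := cs.reflCocycle_mul (cs.wordProd ω) ((cs.wordProd ω)⁻¹ * x) (cs.simple i)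
      rwa [mul_inv_cancel_left, cs.isLeftDescent_iff_reflCocycle_simple.1 (hx i),
        cs.reflCocycle_simple_eq_one_of_not_isLeftDescent hi, one_mul, eq_comm] at this
    have hlt := (cs.isLeftInversion_of_reflCocycle_eq_neg_one hη).2
    rw [show (cs.wordProd ω)⁻¹ * cs.simple i * cs.wordProd ω * ((cs.wordProd ω)⁻¹ * x) =
      (cs.wordProd (i :: ω))⁻¹ * x by simp [cs.wordProd_cons, mul_assoc]] at hlt
    have hle := cs.length_le_length_mul_add_left (cs.wordProd (i :: ω))⁻¹ x
    have hih := ih hω'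
    rw [cs.length_inv, hω, List.length_cons] at hle
    rw [hω, List.length_cons]
    rw [hω'] at hih
    omega

variable {cs} in
theorem IsLeftDescent.mul_of_length_mul_eq {w y : W} {i : B} (h : cs.IsLeftDescent w i)
    (hy : cs.length (w * y) = cs.length w + cs.length y) : cs.IsLeftDescent (w * y) i := by
  have := cs.length_mul_le (cs.simple i * w) y
  rw [mul_assoc] at this
  unfold IsLeftDescent at h ⊢
  omega

theorem eq_of_forall_isLeftDescent {x wS : W} (hx : ∀ i, cs.IsLeftDescent x i)
    (hwS : ∀ v, cs.length v ≤ cs.length wS) : x = wS := by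
  have h := cs.length_add_length_inv_mul_of_forall_isLeftDescent hx wS
  have : cs.length (wS⁻¹ * x) = 0 := by linarith [hwS x]
  exact (inv_mul_eq_one.1 (cs.length_eq_zero_iff.1 this)).symm

theorem eq_of_length_eq {x wS : W} (hwS : ∀ v, cs.length v ≤ cs.length wS)
    (h : cs.length x = cs.length wS) : x = wS :=
  cs.eq_of_forall_isLeftDescent
    (fun i => lt_of_le_of_ne (h ▸ hwS _) (cs.length_simple_mul_ne x i)) hwS

end CoxeterSystem

end

namespace Okuyama

variable {B W : Type} [Group W] {M : CoxeterMatrix B} (cs : CoxeterSystem M W)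

theorem simple_mem_parab {I : Set B} {t : B} (ht : t ∈ I) : cs.simple t ∈ parab cs I :=
  Subgroup.subset_closure (Set.mem_image_of_mem _ ht)

theorem length_mul_of_mem_D {I J : Set B} {w v : W} (hw : w ∈ D cs I J) (hv : v ∈ parab cs J) :
    cs.length (w * v) = cs.length w + cs.length v := by
  simpa using hw 1 (one_mem _) v hv

theorem isLeftDescent_mul_of_simple_eq_conj {I J : Set B} {w wJ : W} {i t : B} (hw : w ∈ D cs I J)
    (hwJ : wJ ∈ parab cs J) (hwJmax : ∀ v ∈ parab cs J, cs.length v ≤ cs.length wJ)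
    (ht : t ∈ J) (hi : cs.simple i = w * cs.simple t * w⁻¹) : cs.IsLeftDescent (w * wJ) i := by
  have hmem : cs.simple t * wJ ∈ parab cs J := mul_mem (simple_mem_parab cs ht) hwJ
  have hlt : cs.length (cs.simple t * wJ) < cs.length wJ :=
    lt_of_le_of_ne (hwJmax _ hmem) (cs.length_simple_mul_ne wJ t)
  have hconj : cs.simple i * (w * wJ) = w * (cs.simple t * wJ) := by
    rw [hi]
    group
  rw [CoxeterSystem.IsLeftDescent, hconj, length_mul_of_mem_D cs hw hmem,
    length_mul_of_mem_D cs hw hwJ]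
  omega

end Okuyama

theorem okuyama_statement4_general
    {B : Type} {W : Type} [Group W]
    {M : CoxeterMatrix B} (cs : CoxeterSystem M W)
    (I₀ : Set B)
    (wS : W) (hwS : ∀ v : W, cs.length v ≤ cs.length wS)
    (wI₀ : W) (hwI₀mem : wI₀ ∈ parab cs I₀)
    (hwI₀max : ∀ v ∈ parab cs I₀, cs.length v ≤ cs.length wI₀) :
    ∀ w ∈ D cs ∅ I₀, w ≠ wS * wI₀ →
      ∃ s : B, cs.length (cs.simple s * w) > cs.length w ∧
        ∀ t ∈ I₀, cs.simple s ≠ w * cs.simple t * w⁻¹ := by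
  intro w hw hne
  by_contra! hcon
  have hdesc : ∀ i, cs.IsLeftDescent (w * wI₀) i := by
    intro i
    by_cases hi : cs.IsLeftDescent w i
    · exact hi.mul_of_length_mul_eq (length_mul_of_mem_D cs hw hwI₀mem)
    · obtain ⟨t, ht, hst⟩ := hcon i (by rw [cs.not_isLeftDescent_iff] at hi; omega)
      exact isLeftDescent_mul_of_simple_eq_conj cs hw hwI₀mem hwI₀max ht hst
  have hlen : cs.length (w * wI₀⁻¹) = cs.length wS := by
    rw [length_mul_of_mem_D cs hw (inv_mem hwI₀mem), cs.length_inv,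
      ← length_mul_of_mem_D cs hw hwI₀mem, cs.eq_of_forall_isLeftDescent hdesc hwS]
  -- `w w_{I₀}⁻¹` also has the length of `w_S`; this avoids proving `w_{I₀}² = 1`.
  exact hne (mul_inv_eq_iff_eq_mul.1 (cs.eq_of_length_eq hwS hlen))

/-- [Cabanes, On Okuyama's theorems about Alvis-Curtis
duality], proof of Proposition 3.  For every `w ∈ D_{∅,I₀}` with
`w ≠ w_S·w_{I₀}` there is a simple reflection `s` with `ℓ(sw) > ℓ(w)` and
`s ∉ w·I₀·w⁻¹`. -/
theorem okuyama_statement4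
    {B : Type} [Fintype B] [LinearOrder B] {W : Type} [Group W] [Fintype W]
    {M : CoxeterMatrix B} (cs : CoxeterSystem M W)
    (I₀ : Set B) (hI₀ : I₀ ≠ Set.univ)
    (wS : W) (hwS : ∀ v : W, cs.length v ≤ cs.length wS)
    (wI₀ : W) (hwI₀mem : wI₀ ∈ parab cs I₀)
    (hwI₀max : ∀ v ∈ parab cs I₀, cs.length v ≤ cs.length wI₀) :
    ∀ w ∈ D cs ∅ I₀, w ≠ wS * wI₀ →
      ∃ s : B, cs.length (cs.simple s * w) > cs.length w ∧
        ∀ t ∈ I₀, cs.simple s ≠ w * cs.simple t * w⁻¹ :=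
  okuyama_statement4_general cs I₀ wS hwS wI₀ hwI₀mem hwI₀max
end

section
/- Let b, b' ∈ A(I₀) with b ⊆ b' (inclusion of cosets). Then I₀(b) ⊆ I₀(b'), ℓ(b') ≤ ℓ(b), and v₀(b') ≤_r v₀(b), i.e. v₀(b) = u·v₀(b') for some u ∈ W with ℓ(v₀(b)) = ℓ(u) + ℓ(v₀(b')). -/
open scoped Classical

open Okuyama

/-- Remark 7 of [Cabanes, On Okuyama's theorems about
Alvis-Curtis duality].  If `b ⊆ b'` are cosets in `A(I₀)`, then
`I₀(b) ⊆ I₀(b')`, `ℓ(b') ≤ ℓ(b)` and `v₀(b') ≤_r v₀(b)` (right divisibility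
with lengths adding). -/
theorem okuyama_statement6
    {B : Type} [Fintype B] [LinearOrder B] {W : Type} [Group W] [Fintype W]
    {M : CoxeterMatrix B} (cs : CoxeterSystem M W)
    (I₀ : Set B) (hI₀ : I₀ ≠ Set.univ)
    (b b' : Set W) (hb : b ∈ AI cs I₀) (hb' : b' ∈ AI cs I₀) (hbb' : b ⊆ b') :
    I0of cs I₀ b ⊆ I0of cs I₀ b' ∧
    lof cs b' ≤ lof cs b ∧
    ∀ vb ∈ b ∩ D cs (Sof cs b) I₀, ∀ vb' ∈ b' ∩ D cs (Sof cs b') I₀,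
      ∃ u : W, vb = u * vb' ∧ cs.length vb = cs.length u + cs.length vb' := by

  refine ⟨?_, ?_, ?_⟩
  · rintro s ⟨hsI, x, hx, y, hy, hxy⟩
    exact ⟨hsI, x, hbb' hx, y, hbb' hy, hxy⟩
  · obtain ⟨x, hx, _⟩ := hb.2
    have hmem : cs.length x ∈ cs.length '' b := ⟨x, hx, rfl⟩
    have h1 : sInf (cs.length '' b) ∈ cs.length '' b := Nat.sInf_mem ⟨_, hmem⟩
    obtain ⟨y, hy, hyl⟩ := h1
    calc lof cs b' ≤ cs.length y := Nat.sInf_le ⟨y, hbb' hy, rfl⟩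
      _ = lof cs b := hyl
  · rintro vb ⟨hvb, _⟩ vb' ⟨hvb'1, hvb'2⟩
    obtain ⟨I', w', hI'⟩ := hb'.1
    obtain ⟨u₁, hu₁, hvbw⟩ : ∃ u ∈ parab cs I', vb = u * w' := by have := hbb' hvb; rwa [hI'] at this
    obtain ⟨u₀, hu₀, hvb'w⟩ : ∃ u ∈ parab cs I', vb' = u * w' := by have := hvb'1; rwa [hI'] at this
    refine ⟨u₁ * u₀⁻¹, ?_, ?_⟩
    · rw [hvbw, hvb'w]; group
    · have hsub : I' ⊆ Sof cs b' := by
        intro s hs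
        have hsimp : cs.simple s ∈ parab cs I' :=
          Subgroup.subset_closure ⟨s, hs, rfl⟩
        refine ⟨cs.simple s * vb', ?_, vb', hvb'1, by group⟩
        rw [hI', hvb'w]
        exact ⟨cs.simple s * u₀, mul_mem hsimp hu₀, by group⟩
      have humem : u₁ * u₀⁻¹ ∈ parab cs (Sof cs b') :=
        Subgroup.closure_mono (Set.image_mono hsub)
          (mul_mem hu₁ (inv_mem hu₀))
      have := hvb'2 (u₁ * u₀⁻¹) humem 1 (one_mem _)
      simp only [mul_one, cs.length_one, add_zero] at this
      rw [show vb = u₁ * u₀⁻¹ * vb' by rw [hvbw, hvb'w]; group]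
      exact this
end

section
/- Let A be a ring and C a bounded cochain complex of A-modules whose homology is concentrated in degree 0 (H^i(C) = 0 for all i ≠ 0). Assume that for every i, both of the following cochain complexes of abelian groups have homology concentrated in degree 0: (a) the complex Homgr_A(C^i, C) with degree-j term Hom_A(C^i, C^j) and differential given by postcomposition with ∂_C; (b) the complex Homgr_A(C, C^i) with degree-j term Hom_A(C^{−j}, C^i) and differential induced by precomposition with ∂_C (with the usual sign). Then C is homotopy equivalent to the complex H⁰(C)[0] having the A-module H⁰(C) in degree 0 and zero elsewhere; i.e. C ≅ H⁰(C)[0] in K^b(A). -/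
/-!
Composing left to right as `≫` does, call maps `σ_j : C^j → C^{j-1}` a contraction of `C` at `j`
if `σ_j ∂ + ∂ σ_{j+1} = 1` on `C^j`. Given a contraction at `j + 1`, the endomorphism
`1 - ∂ σ_{j+1}` of `C^j` is a cocycle of `Homgr_A(C^j, C)` in degree `j`, so for `j > 0` it is
`σ_j ∂` for some `σ_j`: this builds a contraction at every `j > 0` downwards from the top of `C`.
Dually, `Homgr_A(C, C^j)` gives one at every `j < 0` upwards from the bottom.

In degree `0`, `1 - ∂ σ_1` lands in the cycles and `1 - σ_0 ∂` factors through the opcycles, which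
yields maps `C → H⁰(C)[0] → C`. The composite `H⁰(C) → H⁰(C)` is the identity, and the composite
`C → C` is `1 - σ ∂ - ∂ σ` once `σ_1` is replaced by `σ_1 (1 - σ_0 ∂)`, so `σ` itself is a
homotopy from the identity.
-/

open CategoryTheory CategoryTheory.Limits

namespace CochainComplex

open HomologicalComplex

variable {V : Type*} [Category* V] [Preadditive V] (C : CochainComplex V ℤ)

def ContractsAt (σ : ∀ i j : ℤ, C.X i ⟶ C.X j) (j : ℤ) : Prop :=
  σ j (j - 1) ≫ C.d (j - 1) j + C.d j (j + 1) ≫ σ (j + 1) j = 𝟙 (C.X j)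

variable {C} {σ : ∀ i j : ℤ, C.X i ⟶ C.X j}

lemma contractsAt_iff {i j k : ℤ} (hij : i + 1 = j) (hjk : j + 1 = k) :
    C.ContractsAt σ j ↔ σ j i ≫ C.d i j + C.d j k ≫ σ k j = 𝟙 (C.X j) := by
  obtain rfl : i = j - 1 := by omega
  subst hjk
  rfl

lemma ContractsAt.d_comp_comp_d_to {i j : ℤ} (h : C.ContractsAt σ j) (hij : i + 1 = j) :
    C.d i j ≫ σ j i ≫ C.d i j = C.d i j := by
  rw [eq_sub_of_add_eq ((contractsAt_iff hij rfl).1 h)]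
  simp [Preadditive.comp_sub]

lemma ContractsAt.d_comp_comp_d_from {j k : ℤ} (h : C.ContractsAt σ j) (hjk : j + 1 = k) :
    C.d j k ≫ σ k j ≫ C.d j k = C.d j k := by
  rw [← Category.assoc, eq_sub_of_add_eq' ((contractsAt_iff (sub_add_cancel j 1) hjk).1 h)]
  simp [Preadditive.sub_comp]

lemma contractsAt_update_iff {a j : ℤ} (g : ∀ b, C.X a ⟶ C.X b) (hj : j ≠ a)
    (hj' : j + 1 ≠ a) :
    C.ContractsAt (Function.update σ a g) j ↔ C.ContractsAt σ j := by
  rw [ContractsAt, ContractsAt, Function.update_of_ne hj, Function.update_of_ne hj']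

lemma exists_contractsAt_ge_of_gt {j : ℤ} (hσ : ∀ k, j < k → C.ContractsAt σ k)
    (hexact : ∀ φ : C.X j ⟶ C.X j, φ ≫ C.d j (j + 1) = 0 →
      ∃ ψ : C.X j ⟶ C.X (j - 1), ψ ≫ C.d (j - 1) j = φ) :
    ∃ σ' : ∀ i j : ℤ, C.X i ⟶ C.X j, ∀ k, j ≤ k → C.ContractsAt σ' k := by
  obtain ⟨ψ, hψ⟩ := hexact (𝟙 _ - C.d j (j + 1) ≫ σ (j + 1) j) (by
    simp [Preadditive.sub_comp, (hσ (j + 1) (by omega)).d_comp_comp_d_to rfl])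
  refine ⟨Function.update σ j (Function.update (σ j) (j - 1) ψ), fun k hk => ?_⟩
  rcases hk.eq_or_lt with rfl | hk
  · rw [ContractsAt, Function.update_self, Function.update_self,
      Function.update_of_ne (by omega), hψ, sub_add_cancel]
  · exact (contractsAt_update_iff _ (by omega) (by omega)).2 (hσ k hk)

lemma exists_contractsAt_le_of_lt {j : ℤ} (hσ : ∀ k, k < j → C.ContractsAt σ k)
    (hexact : ∀ φ : C.X j ⟶ C.X j, C.d (j - 1) j ≫ φ = 0 →
      ∃ ψ : C.X (j + 1) ⟶ C.X j, C.d j (j + 1) ≫ ψ = φ) :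
    ∃ σ' : ∀ i j : ℤ, C.X i ⟶ C.X j, ∀ k, k ≤ j → C.ContractsAt σ' k := by
  obtain ⟨ψ, hψ⟩ := hexact (𝟙 _ - σ j (j - 1) ≫ C.d (j - 1) j) (by
    simp [Preadditive.comp_sub, (hσ (j - 1) (by omega)).d_comp_comp_d_from (sub_add_cancel j 1)])
  refine ⟨Function.update σ (j + 1) (Function.update (σ (j + 1)) j ψ), fun k hk => ?_⟩
  rcases hk.eq_or_lt with rfl | hk
  · rw [ContractsAt, Function.update_self, Function.update_self,
      Function.update_of_ne (by omega), hψ, add_sub_cancel]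
  · exact (contractsAt_update_iff _ (by omega) (by omega)).2 (hσ k hk)

lemma exists_contractsAt_of_pos (n : ℤ) [C.IsStrictlyLE n]
    (hexact : ∀ j, 0 < j → ∀ φ : C.X j ⟶ C.X j, φ ≫ C.d j (j + 1) = 0 →
      ∃ ψ : C.X j ⟶ C.X (j - 1), ψ ≫ C.d (j - 1) j = φ) :
    ∃ σ : ∀ i j : ℤ, C.X i ⟶ C.X j, ∀ j, 0 < j → C.ContractsAt σ j := by
  suffices h : ∀ m ≤ max n 0 + 1, 0 < m → ∃ σ : ∀ i j : ℤ, C.X i ⟶ C.X j,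
      ∀ j, m ≤ j → C.ContractsAt σ j from
    (h 1 (by omega) one_pos).imp fun σ hσ j hj => hσ j hj
  intro m hm
  induction m, hm using Int.leInductionDown with
  | base => exact fun _ => ⟨0, fun j hj => (C.isZero_of_isStrictlyLE n j).eq_of_src _ _⟩
  | pred m _ ih =>
    intro hm
    obtain ⟨σ, hσ⟩ := ih (by omega)
    exact exists_contractsAt_ge_of_gt (fun k hk => hσ k (by omega)) (hexact _ hm)

lemma exists_contractsAt_of_neg (n : ℤ) [C.IsStrictlyGE n]
    (hexact : ∀ j < 0, ∀ φ : C.X j ⟶ C.X j, C.d (j - 1) j ≫ φ = 0 →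
      ∃ ψ : C.X (j + 1) ⟶ C.X j, C.d j (j + 1) ≫ ψ = φ) :
    ∃ σ : ∀ i j : ℤ, C.X i ⟶ C.X j, ∀ j < 0, C.ContractsAt σ j := by
  suffices h : ∀ m ≥ min n 0 - 1, m < 0 → ∃ σ : ∀ i j : ℤ, C.X i ⟶ C.X j,
      ∀ j ≤ m, C.ContractsAt σ j from
    (h (-1) (by omega) (by omega)).imp fun σ hσ j hj => hσ j (by omega)
  intro m hm
  induction m, hm using Int.leInduction with
  | base => exact fun _ => ⟨0, fun j hj => (C.isZero_of_isStrictlyGE n j).eq_of_src _ _⟩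
  | succ m _ ih =>
    intro hm
    obtain ⟨σ, hσ⟩ := ih (by omega)
    exact exists_contractsAt_le_of_lt (fun k hk => hσ k (by omega)) (hexact _ hm)

variable (C) in
structure ContractionAwayFromZero where
  hom : ∀ i j : ℤ, C.X i ⟶ C.X j
  contractsAt : ∀ j ≠ 0, C.ContractsAt hom j
  /-- Always achievable (`ofContractsAt`); it makes `(1 - ∂ σ_1)(1 - σ_0 ∂) = 1 - σ_0 ∂ - ∂ σ_1`
  on `C^0`. -/
  hom_comp_hom_comp_d : hom 1 0 ≫ hom 0 (-1) ≫ C.d (-1) 0 = 0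

def ContractionAwayFromZero.ofContractsAt (hσ : ∀ j ≠ 0, C.ContractsAt σ j) :
    C.ContractionAwayFromZero where
  hom := Function.update σ 1
    (Function.update (σ 1) 0 (σ 1 0 ≫ (𝟙 _ - σ 0 (-1) ≫ C.d (-1) 0)))
  contractsAt j hj := by
    by_cases hj1 : j = 1
    · subst hj1
      rw [contractsAt_iff (show 0 + 1 = 1 by rfl) (show 1 + 1 = 2 by rfl), Function.update_self,
        Function.update_self, Function.update_of_ne (by omega),
        ← (contractsAt_iff (show 0 + 1 = 1 by rfl) (show 1 + 1 = 2 by rfl)).1 (hσ 1 one_ne_zero)]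
      simp [Preadditive.sub_comp]
    · exact (contractsAt_update_iff _ hj1 (by omega)).2 (hσ j hj)
  hom_comp_hom_comp_d := by
    rw [Function.update_self, Function.update_self, Function.update_of_ne (by omega)]
    simp [Preadditive.sub_comp, Preadditive.comp_sub,
      (hσ (-1) (by omega)).d_comp_comp_d_from (show -1 + 1 = 0 by rfl)]

lemma nonempty_contractionAwayFromZero (m n : ℤ) [C.IsStrictlyGE m] [C.IsStrictlyLE n]
    (hpos : ∀ j, 0 < j → ∀ φ : C.X j ⟶ C.X j, φ ≫ C.d j (j + 1) = 0 →
      ∃ ψ : C.X j ⟶ C.X (j - 1), ψ ≫ C.d (j - 1) j = φ)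
    (hneg : ∀ j < 0, ∀ φ : C.X j ⟶ C.X j, C.d (j - 1) j ≫ φ = 0 →
      ∃ ψ : C.X (j + 1) ⟶ C.X j, C.d j (j + 1) ≫ ψ = φ) :
    Nonempty C.ContractionAwayFromZero := by
  obtain ⟨σpos, hσpos⟩ := C.exists_contractsAt_of_pos n hpos
  obtain ⟨σneg, hσneg⟩ := C.exists_contractsAt_of_neg m hneg
  refine ⟨.ofContractsAt (σ := fun i j => if 0 < i then σpos i j else σneg i j) fun j hj => ?_⟩
  rcases hj.lt_or_gt with hj | hj
  · rw [ContractsAt, if_neg (by omega), if_neg (by omega)]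
    exact hσneg j hj
  · rw [ContractsAt, if_pos hj, if_pos (by omega)]
    exact hσpos j hj

namespace ContractionAwayFromZero

variable [C.HasHomology 0] (h : C.ContractionAwayFromZero)

noncomputable def toHomology : C.X 0 ⟶ C.homology 0 :=
  C.liftCycles (𝟙 _ - C.d 0 1 ≫ h.hom 1 0) 1 (by simp) (by
    simp [Preadditive.sub_comp,
      (h.contractsAt 1 one_ne_zero).d_comp_comp_d_to (zero_add 1)]) ≫
    C.homologyπ 0

noncomputable def ofHomology : C.homology 0 ⟶ C.X 0 :=
  C.homologyι 0 ≫ C.descOpcycles (𝟙 _ - h.hom 0 (-1) ≫ C.d (-1) 0) (-1) (by simp) (by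
    simp [Preadditive.comp_sub,
      (h.contractsAt (-1) (by omega)).d_comp_comp_d_from (show -1 + 1 = 0 by rfl)])

lemma ofHomology_comp_toHomology : h.ofHomology ≫ h.toHomology = 𝟙 _ := by
  rw [← cancel_epi (C.homologyπ 0), ← cancel_mono (C.homologyι 0)]
  simp [ofHomology, toHomology, Preadditive.sub_comp, Preadditive.comp_sub]

lemma toHomology_comp_ofHomology :
    h.toHomology ≫ h.ofHomology = 𝟙 _ - h.hom 0 (-1) ≫ C.d (-1) 0 - C.d 0 1 ≫ h.hom 1 0 := by
  simp only [toHomology, ofHomology, Category.assoc, homology_π_ι_assoc, p_descOpcycles,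
    Preadditive.comp_sub, Category.comp_id, liftCycles_i, liftCycles_i_assoc, Preadditive.sub_comp,
    Category.id_comp, h.hom_comp_hom_comp_d, comp_zero, sub_zero]
  abel

variable [HasZeroObject V]

noncomputable def toSingle : C ⟶ (single V (ComplexShape.up ℤ) 0).obj (C.homology 0) :=
  mkHomToSingle h.toHomology fun i hi => by
    obtain rfl : i = -1 := by simp at hi; omega
    rw [toHomology, ← Category.assoc, comp_liftCycles]
    exact C.liftCycles_homologyπ_eq_zero_of_boundary _ _ _ (𝟙 _)
      (by simp [Preadditive.comp_sub])

noncomputable def fromSingle : (single V (ComplexShape.up ℤ) 0).obj (C.homology 0) ⟶ C :=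
  mkHomFromSingle h.ofHomology fun k hk => by
    obtain rfl : k = 1 := by simp at hk; omega
    rw [ofHomology, Category.assoc, descOpcycles_comp]
    exact C.homologyι_descOpcycles_eq_zero_of_boundary _ _ _ (𝟙 _)
      (by simp [Preadditive.sub_comp])

lemma fromSingle_comp_toSingle : h.fromSingle ≫ h.toSingle = 𝟙 _ := by
  apply from_single_hom_ext
  simp [fromSingle, toSingle, reassoc_of% h.ofHomology_comp_toHomology]

lemma id_sub_toSingle_comp_fromSingle :
    𝟙 C - h.toSingle ≫ h.fromSingle = Homotopy.nullHomotopicMap' fun i j _ => h.hom i j := by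
  ext i
  rw [Homotopy.nullHomotopicMap'_f (show (ComplexShape.up ℤ).Rel (i - 1) i by simp)
    (show (ComplexShape.up ℤ).Rel i (i + 1) by simp)]
  by_cases hi : i = 0
  · subst hi
    simp only [toSingle, fromSingle, sub_f_apply, id_f, comp_f, mkHomToSingle_f, mkHomFromSingle_f,
      Category.assoc, Iso.inv_hom_id_assoc, toHomology_comp_ofHomology, Int.reduceNeg,
      Int.reduceAdd, Int.reduceSub]
    abel
  · have hzero := (isZero_single_obj_X _ 0 _ i hi).eq_of_tgt (h.toSingle.f i) 0
    simpa [hzero, add_comm] using (h.contractsAt i hi).symm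

noncomputable def homotopyEquivSingleHomology :
    HomotopyEquiv C ((single V (ComplexShape.up ℤ) 0).obj (C.homology 0)) where
  hom := h.toSingle
  inv := h.fromSingle
  homotopyHomInvId :=
    (Homotopy.equivSubZero.symm ((Homotopy.ofEq h.id_sub_toSingle_comp_fromSingle).trans
      (Homotopy.nullHomotopy' _))).symm
  homotopyInvHomId := Homotopy.ofEq h.fromSingle_comp_toSingle

end ContractionAwayFromZero

end CochainComplex

theorem okuyama_statement9_general
    (A : Type) [Ring A] (C : CochainComplex (ModuleCat A) ℤ)
    (hbdd : ∃ n : ℕ, ∀ i : ℤ, (n : ℤ) < |i| → IsZero (C.X i))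
    -- `Homgr_A(C^i, C)` has homology concentrated in degree 0
    (hHomFrom : ∀ i j : ℤ, j ≠ 0 → ∀ φ : C.X i ⟶ C.X j,
        φ ≫ C.d j (j + 1) = 0 →
        ∃ ψ : C.X i ⟶ C.X (j - 1), ψ ≫ C.d (j - 1) j = φ)
    -- `Homgr_A(C, C^i)` has homology concentrated in degree 0
    (hHomTo : ∀ i j : ℤ, j ≠ 0 → ∀ φ : C.X (-j) ⟶ C.X i,
        C.d (-j - 1) (-j) ≫ φ = 0 →
        ∃ ψ : C.X (-j + 1) ⟶ C.X i, C.d (-j) (-j + 1) ≫ ψ = φ) :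
    Nonempty (HomotopyEquiv C
      ((HomologicalComplex.single (ModuleCat A) (ComplexShape.up ℤ) 0).obj
        (C.homology 0))) := by
  obtain ⟨n, hn⟩ := hbdd
  have : C.IsStrictlyLE n := (C.isStrictlyLE_iff n).2 fun i hi => hn i (by grind)
  have : C.IsStrictlyGE (-n) := (C.isStrictlyGE_iff (-n)).2 fun i hi => hn i (by grind)
  obtain ⟨h⟩ := C.nonempty_contractionAwayFromZero (-n) n (fun j hj => hHomFrom j j hj.ne')
    fun j hj => by
      have hto := hHomTo j (-j) (by omega)
      rwa [neg_neg] at hto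
  exact ⟨h.homotopyEquivSingleHomology⟩

/-- Lemma 14 of [Cabanes, On Okuyama's theorems about
Alvis-Curtis duality], after [Rickard].  Let `C` be a bounded cochain complex
of `A`-modules whose homology is concentrated in degree `0`, and such that for
every term `C^i` of `C` the complexes `Homgr_A(C^i, C)` and `Homgr_A(C, C^i)`
have homology concentrated in degree `0` (the latter conditions are spelled out
elementwise: every cocycle in nonzero degree is a coboundary).  Then
`C ≅ H⁰(C)[0]` in `K^b(A)`. -/
theorem okuyama_statement9
    (A : Type) [Ring A] (C : CochainComplex (ModuleCat A) ℤ)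
    (hbdd : ∃ n : ℕ, ∀ i : ℤ, (n : ℤ) < |i| → IsZero (C.X i))
    (hH : ∀ i : ℤ, i ≠ 0 → IsZero (C.homology i))
    -- `Homgr_A(C^i, C)` has homology concentrated in degree 0
    (hHomFrom : ∀ i j : ℤ, j ≠ 0 → ∀ φ : C.X i ⟶ C.X j,
        φ ≫ C.d j (j + 1) = 0 →
        ∃ ψ : C.X i ⟶ C.X (j - 1), ψ ≫ C.d (j - 1) j = φ)
    -- `Homgr_A(C, C^i)` has homology concentrated in degree 0
    (hHomTo : ∀ i j : ℤ, j ≠ 0 → ∀ φ : C.X (-j) ⟶ C.X i,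
        C.d (-j - 1) (-j) ≫ φ = 0 →
        ∃ ψ : C.X (-j + 1) ⟶ C.X i, C.d (-j) (-j + 1) ≫ ψ = φ) :
    Nonempty (HomotopyEquiv C
      ((HomologicalComplex.single (ModuleCat A) (ComplexShape.up ℤ) 0).obj
        (C.homology 0))) :=
  okuyama_statement9_general A C hbdd hHomFrom hHomTo
end

section
/- In the tensor product of R-modules H ⊗_R H, for every s ∈ S one has Σ_{w∈W} (−1)^{ℓ(w)} (h_s·h_w) ⊗ (h_w⁻¹·h_s) = −q_s · Σ_{w∈W} (−1)^{ℓ(w)} h_w ⊗ h_w⁻¹. -/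
open scoped Classical TensorProduct

namespace OkuyamaHecke

/-- For an element `hs` of an `R`-algebra `H`, the `R`-submodule of `H ⊗[R] H`
spanned by the elements `(x·hs) ⊗ y - x ⊗ (hs·y)` (for `hs = h_s` this is the
kernel of the canonical map `H ⊗_R H → H ⊗_{H_s} H`). -/
def Ns (R : Type) [CommRing R] (H : Type) [Ring H] [Algebra R H] (hs : H) :
    Submodule R (H ⊗[R] H) :=
  Submodule.span R
    {z : H ⊗[R] H | ∃ x y : H, z = (x * hs) ⊗ₜ[R] y - x ⊗ₜ[R] (hs * y)}

end OkuyamaHecke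

open OkuyamaHecke

/-!
Fix a simple reflection `σ` and put `g w = h_w ⊗ h_w⁻¹`. Comparing `w` with `σw`, the quadratic
relation gives `(h_σ h_w) ⊗ (h_w⁻¹ h_σ) = q g(σw) + (q - 1) c(w)`, where `c(w) = h_v ⊗ h_{σv}⁻¹`
for the longer element `v` of `{w, σw}`. Since `w ↦ σw` is a fixed-point-free involution
reversing the sign `(-1)^ℓ(w)`, the signed sum of `g(σw)` is minus that of `g(w)`, and the signed
sum of `c`, which is constant on the orbits `{w, σw}`, vanishes.
-/

section QuadraticRelation

variable {R A : Type*} [CommRing R] [Ring A] [Algebra R A] {x : A}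

theorem mul_sub_smul_one_of_mul_self_eq {q : R} (hx : x * x = (q - 1) • x + q • 1) :
    x * (x - (q - 1) • 1) = q • 1 := by
  rw [mul_sub, hx, mul_smul_comm, mul_one]
  abel

theorem isUnit_of_mul_self_eq (q : Rˣ) (hx : x * x = ((q : R) - 1) • x + (q : R) • 1) :
    IsUnit x := by
  have hright := mul_sub_smul_one_of_mul_self_eq hx
  have hcomm : Commute x (x - ((q : R) - 1) • 1) :=
    (Commute.refl x).sub_right ((Commute.one_right x).smul_right _)
  refine ⟨⟨x, (q⁻¹ : Rˣ) • (x - ((q : R) - 1) • 1), ?_, ?_⟩, rfl⟩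
  · rw [mul_smul_comm, hright, Units.smul_def, smul_smul, Units.inv_mul, one_smul]
  · rw [smul_mul_assoc, ← hcomm.eq, hright, Units.smul_def, smul_smul, Units.inv_mul, one_smul]

theorem eq_smul_ringInverse_of_mul_self_eq (q : Rˣ)
    (hx : x * x = ((q : R) - 1) • x + (q : R) • 1) :
    x = (q : R) • Ring.inverse x + ((q : R) - 1) • 1 := by
  have hinv : Ring.inverse x * ((q : R) • 1) = x - ((q : R) - 1) • 1 :=
    (Ring.inverse_mul_eq_iff_eq_mul _ _ _ (isUnit_of_mul_self_eq q hx)).mpr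
      (mul_sub_smul_one_of_mul_self_eq hx).symm
  rw [mul_smul_comm, mul_one] at hinv
  rw [hinv, sub_add_cancel]

end QuadraticRelation

namespace CoxeterSystem

variable {B W : Type*} [Group W] {M : CoxeterMatrix B} (cs : CoxeterSystem M W)

theorem neg_one_pow_length_simple_mul (w : W) (i : B) :
    (-1 : ℤ) ^ cs.length (cs.simple i * w) = -(-1) ^ cs.length w := by
  rcases cs.length_simple_mul w i with hl | hl
  · rw [hl, pow_succ, mul_neg_one]
  · rw [← hl, pow_succ, mul_neg_one, neg_neg]

variable [Fintype W] {A : Type*} [AddCommGroup A]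

theorem sum_neg_one_pow_length_smul_simple_mul (f : W → A) (i : B) :
    ∑ w : W, (-1 : ℤ) ^ cs.length w • f (cs.simple i * w)
      = -∑ w : W, (-1 : ℤ) ^ cs.length w • f w := by
  rw [← Finset.sum_neg_distrib]
  refine Fintype.sum_equiv (Equiv.mulLeft (cs.simple i)) _ _ fun w => ?_
  rw [Equiv.coe_mulLeft, neg_one_pow_length_simple_mul, neg_smul, neg_neg]

theorem sum_neg_one_pow_length_smul_eq_zero (f : W → A) (i : B)
    (hf : ∀ w, f (cs.simple i * w) = f w) :
    ∑ w : W, (-1 : ℤ) ^ cs.length w • f w = 0 := by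
  refine Finset.sum_ninvolution (cs.simple i * ·) (fun w => ?_) (fun w _ hw => ?_)
    (fun _ => Finset.mem_univ _) fun _ => cs.simple_mul_simple_cancel_left i
  · rw [hf, neg_one_pow_length_simple_mul, neg_smul, add_neg_cancel]
  · exact cs.length_simple_mul_ne w i (congrArg cs.length hw)

end CoxeterSystem

namespace OkuyamaHecke

variable {B W : Type*} [Group W] {M : CoxeterMatrix B} (cs : CoxeterSystem M W)
  {R H : Type*} [CommRing R] [Ring H] [Algebra R H] (h : W → H)

theorem simple_mul_of_not_isLeftDescent
    (hmul : ∀ w w' : W, cs.length (w * w') = cs.length w + cs.length w' →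
      h w * h w' = h (w * w'))
    {w : W} {i : B} (hw : ¬cs.IsLeftDescent w i) :
    h (cs.simple i) * h w = h (cs.simple i * w) :=
  hmul _ _ <| by rw [cs.not_isLeftDescent_iff.mp hw, cs.length_simple, add_comm]

theorem simple_mul_simple_mul_of_isLeftDescent
    (hmul : ∀ w w' : W, cs.length (w * w') = cs.length w + cs.length w' →
      h w * h w' = h (w * w'))
    {w : W} {i : B} (hw : cs.IsLeftDescent w i) :
    h (cs.simple i) * h (cs.simple i * w) = h w := by
  rw [simple_mul_of_not_isLeftDescent cs h hmul
    (cs.isLeftDescent_iff_not_isLeftDescent_mul.mp hw), cs.simple_mul_simple_cancel_left]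

theorem simple_mul_of_isLeftDescent
    (hmul : ∀ w w' : W, cs.length (w * w') = cs.length w + cs.length w' →
      h w * h w' = h (w * w'))
    {i : B} {q : R}
    (hquad : h (cs.simple i) * h (cs.simple i) = (q - 1) • h (cs.simple i) + q • 1)
    {w : W} (hw : cs.IsLeftDescent w i) :
    h (cs.simple i) * h w = (q - 1) • h w + q • h (cs.simple i * w) := by
  rw [← simple_mul_simple_mul_of_isLeftDescent cs h hmul hw, ← mul_assoc, hquad, add_mul,
    smul_mul_assoc, smul_mul_assoc, one_mul]

theorem ringInverse_mul_simple_of_not_isLeftDescent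
    (hmul : ∀ w w' : W, cs.length (w * w') = cs.length w + cs.length w' →
      h w * h w' = h (w * w'))
    {i : B} (q : Rˣ)
    (hquad : h (cs.simple i) * h (cs.simple i) = ((q : R) - 1) • h (cs.simple i) + (q : R) • 1)
    {w : W} (hw : ¬cs.IsLeftDescent w i) :
    Ring.inverse (h w) * h (cs.simple i)
      = (q : R) • Ring.inverse (h (cs.simple i * w)) + ((q : R) - 1) • Ring.inverse (h w) := by
  rw [← simple_mul_of_not_isLeftDescent cs h hmul hw,
    Ring.inverse_mul (.inl (isUnit_of_mul_self_eq q hquad))]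
  conv_lhs => rw [eq_smul_ringInverse_of_mul_self_eq q hquad]
  rw [mul_add, mul_smul_comm, mul_smul_comm, mul_one]

theorem ringInverse_mul_simple_of_isLeftDescent
    (hmul : ∀ w w' : W, cs.length (w * w') = cs.length w + cs.length w' →
      h w * h w' = h (w * w'))
    {i : B} (q : Rˣ)
    (hquad : h (cs.simple i) * h (cs.simple i) = ((q : R) - 1) • h (cs.simple i) + (q : R) • 1)
    {w : W} (hw : cs.IsLeftDescent w i) :
    Ring.inverse (h w) * h (cs.simple i) = Ring.inverse (h (cs.simple i * w)) := by
  have hunit := isUnit_of_mul_self_eq q hquad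
  rw [← simple_mul_simple_mul_of_isLeftDescent cs h hmul hw, Ring.inverse_mul (.inl hunit),
    mul_assoc, Ring.inverse_mul_cancel _ hunit, mul_one]

noncomputable def crossTerm (i : B) (w : W) : H ⊗[R] H :=
  if cs.IsLeftDescent w i then h w ⊗ₜ[R] Ring.inverse (h (cs.simple i * w))
  else h (cs.simple i * w) ⊗ₜ[R] Ring.inverse (h w)

theorem crossTerm_simple_mul (i : B) (w : W) :
    crossTerm (R := R) cs h i (cs.simple i * w) = crossTerm cs h i w := by
  have hflip := cs.isLeftDescent_iff_not_isLeftDescent_mul (w := w) (i := i)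
  by_cases hw : cs.IsLeftDescent w i
  · rw [crossTerm, crossTerm, if_neg (hflip.mp hw), if_pos hw, cs.simple_mul_simple_cancel_left]
  · rw [crossTerm, crossTerm, if_pos (not_not.mp (hflip.not.mp hw)), if_neg hw,
      cs.simple_mul_simple_cancel_left]

theorem simple_mul_tmul_ringInverse_mul_simple
    (hmul : ∀ w w' : W, cs.length (w * w') = cs.length w + cs.length w' →
      h w * h w' = h (w * w'))
    {i : B} (q : Rˣ)
    (hquad : h (cs.simple i) * h (cs.simple i) = ((q : R) - 1) • h (cs.simple i) + (q : R) • 1)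
    (w : W) :
    (h (cs.simple i) * h w) ⊗ₜ[R] (Ring.inverse (h w) * h (cs.simple i))
      = (q : R) • (h (cs.simple i * w) ⊗ₜ[R] Ring.inverse (h (cs.simple i * w)))
        + ((q : R) - 1) • crossTerm cs h i w := by
  by_cases hw : cs.IsLeftDescent w i
  · rw [simple_mul_of_isLeftDescent cs h hmul hquad hw,
      ringInverse_mul_simple_of_isLeftDescent cs h hmul q hquad hw, crossTerm, if_pos hw,
      TensorProduct.add_tmul, TensorProduct.smul_tmul', TensorProduct.smul_tmul', add_comm]
  · rw [simple_mul_of_not_isLeftDescent cs h hmul hw,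
      ringInverse_mul_simple_of_not_isLeftDescent cs h hmul q hquad hw, crossTerm, if_neg hw,
      TensorProduct.tmul_add, TensorProduct.tmul_smul, TensorProduct.tmul_smul]

end OkuyamaHecke

theorem okuyama_statement11_general
    {B : Type} {W : Type} [Group W] [Fintype W] {M : CoxeterMatrix B}
    (cs : CoxeterSystem M W)
    (R : Type) [CommRing R] (H : Type) [Ring H] [Algebra R H]
    (q : B → Rˣ)
    (h : W → H)
    (hmul : ∀ w w' : W, cs.length (w * w') = cs.length w + cs.length w' →
        h w * h w' = h (w * w'))
    (hquad : ∀ s : B, h (cs.simple s) * h (cs.simple s) =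
        ((q s : R) - 1) • h (cs.simple s) + (q s : R) • (1 : H))
    (s : B) :
    ∑ w : W, ((-1 : ℤ) ^ cs.length w) •
        ((h (cs.simple s) * h w) ⊗ₜ[R] (Ring.inverse (h w) * h (cs.simple s)))
      = -((q s : R) •
          ∑ w : W, ((-1 : ℤ) ^ cs.length w) • (h w ⊗ₜ[R] Ring.inverse (h w))) := by
  have hcross : ∑ w : W, (-1 : ℤ) ^ cs.length w • crossTerm (R := R) cs h s w = 0 :=
    cs.sum_neg_one_pow_length_smul_eq_zero _ s (crossTerm_simple_mul cs h s)
  calc _ = (q s : R) • ∑ w : W, (-1 : ℤ) ^ cs.length w •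
          (h (cs.simple s * w) ⊗ₜ[R] Ring.inverse (h (cs.simple s * w)))
        + ((q s : R) - 1) • ∑ w : W, (-1 : ℤ) ^ cs.length w • crossTerm cs h s w := by
        simp only [simple_mul_tmul_ringInverse_mul_simple cs h hmul (q s) (hquad s), smul_add,
          Finset.sum_add_distrib, Finset.smul_sum, smul_comm ((-1 : ℤ) ^ _)]
    _ = _ := by
        rw [cs.sum_neg_one_pow_length_smul_simple_mul (fun w => h w ⊗ₜ[R] Ring.inverse (h w)),
          hcross, smul_zero, add_zero, smul_neg]

/-- Remark 18 of [Cabanes, On Okuyama's theorems about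
Alvis-Curtis duality].  In the Iwahori–Hecke algebra `H` of a finite Coxeter
system, for each simple reflection `s`, one has
`Σ_w (-1)^{ℓ(w)} (h_s h_w) ⊗ (h_w⁻¹ h_s) = -q_s Σ_w (-1)^{ℓ(w)} h_w ⊗ h_w⁻¹`
in `H ⊗_R H`. -/
theorem okuyama_statement11
    {B : Type} {W : Type} [Group W] [Fintype W] {M : CoxeterMatrix B}
    (cs : CoxeterSystem M W)
    (R : Type) [CommRing R] (H : Type) [Ring H] [Algebra R H]
    (q : B → Rˣ)
    (hq : ∀ s t : B, IsConj (cs.simple s) (cs.simple t) → q s = q t)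
    (h : W → H) (bW : Module.Basis W R H) (hbW : ∀ w : W, bW w = h w)
    (h1 : h 1 = 1)
    (hmul : ∀ w w' : W, cs.length (w * w') = cs.length w + cs.length w' →
        h w * h w' = h (w * w'))
    (hquad : ∀ s : B, h (cs.simple s) * h (cs.simple s) =
        ((q s : R) - 1) • h (cs.simple s) + (q s : R) • (1 : H))
    (hunit : ∀ w : W, IsUnit (h w))
    (s : B) :
    ∑ w : W, ((-1 : ℤ) ^ cs.length w) •
        ((h (cs.simple s) * h w) ⊗ₜ[R] (Ring.inverse (h w) * h (cs.simple s)))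
      = -((q s : R) •
          ∑ w : W, ((-1 : ℤ) ^ cs.length w) • (h w ⊗ₜ[R] Ring.inverse (h w))) :=
  okuyama_statement11_general cs R H q h hmul hquad s
end

section
/- Let (x_w)_{w∈W} be a family of elements of H and x := Σ_{w∈W} h_w ⊗ x_w ∈ H ⊗_R H. For each s ∈ S, x belongs to N_s if and only if x_{ws} = −h_s⁻¹·x_w for every w ∈ W with ℓ(ws) > ℓ(w). -/
/-! For an ascent `u` of `s` (i.e. `ℓ(us) > ℓ(u)`) one has `h_{us} = h_u h_s`, so
`h_u ⊗ x_u + h_{us} ⊗ x_{us}` differs from `h_u ⊗ (x_u + h_s x_{us})` by a generator of `N_s`;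
pairing `W` into the cosets `{u, us}` gives one direction. Conversely, any `R`-linear
`φ : H → H` commuting with right multiplication by `h_s` makes `a ⊗ y ↦ φ(a) y` vanish on `N_s`.
By the quadratic relation, a map defined on the basis commutes with `h_s` as soon as
`φ(h_{us}) = φ(h_u) h_s` for ascents `u`, so `h_w ↦ 1`, `h_{ws} ↦ h_s`, `h_u ↦ 0` otherwise is
such a map, and it sends `x` to `x_w + h_s x_{ws}`. The quadratic relation also makes `h_s`
invertible, which turns `x_w + h_s x_{ws} = 0` into the stated form. -/

open scoped Classical TensorProduct

open OkuyamaHecke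

namespace OkuyamaHecke

section Quadratic

variable {R H : Type*} [CommRing R] [Ring H] [Algebra R H]

theorem isUnit_of_mul_self_eq_smul_add_smul {c : Rˣ} {T : H}
    (hT : T * T = ((c : R) - 1) • T + (c : R) • 1) : IsUnit T := by
  set T' : H := (↑c⁻¹ : R) • (T - ((c : R) - 1) • 1)
  have hTT' : T * T' = 1 := by
    simp only [T', mul_smul_comm, mul_sub, mul_one, hT]
    simp [smul_smul]
  have hT'T : T' * T = 1 := by
    simp only [T', smul_mul_assoc, sub_mul, one_mul, hT]
    simp [smul_smul]
  exact ⟨⟨T, T', hTT', hT'T⟩, rfl⟩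

theorem add_mul_eq_zero_iff_eq_neg_inverse_mul {T : H} (hT : IsUnit T) (y z : H) :
    y + T * z = 0 ↔ z = -(Ring.inverse T * y) := by
  constructor
  · intro h
    rw [← Ring.inverse_mul_cancel_left T z hT, eq_neg_of_add_eq_zero_right h, mul_neg]
  · rintro rfl
    rw [mul_neg, Ring.mul_inverse_cancel_left T y hT, add_neg_cancel]

end Quadratic

section Ns

variable {R H : Type} [CommRing R] [Ring H] [Algebra R H]

theorem mul_tmul_sub_tmul_mul_mem_Ns (T a y : H) :
    (a * T) ⊗ₜ[R] y - a ⊗ₜ[R] (T * y) ∈ Ns R H T :=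
  Submodule.subset_span ⟨a, y, rfl⟩

theorem Ns_le_ker_lift_mul_comp {T : H} (φ : H →ₗ[R] H) (hφ : ∀ a, φ (a * T) = φ a * T) :
    Ns R H T ≤ LinearMap.ker (TensorProduct.lift ((LinearMap.mul R H).comp φ)) := by
  rw [Ns, Submodule.span_le]
  rintro _ ⟨a, y, rfl⟩
  simp [hφ, mul_assoc]

end Ns

section Coxeter

variable {B W : Type*} [Group W] {M : CoxeterMatrix B} (cs : CoxeterSystem M W)

theorem sum_eq_sum_ascents [Fintype W] {A : Type*} [AddCommMonoid A] (f : W → A) (i : B) :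
    ∑ u, f u = ∑ u with cs.length u < cs.length (u * cs.simple i),
      (f u + f (u * cs.simple i)) := by
  rw [Finset.sum_add_distrib, ← Finset.sum_filter_add_sum_filter_not Finset.univ
    (fun u => cs.length u < cs.length (u * cs.simple i))]
  congr 1
  have cancel (u : W) : u * cs.simple i * cs.simple i = u := cs.simple_mul_simple_cancel_right i
  refine Finset.sum_nbij' (· * cs.simple i) (· * cs.simple i) ?_ ?_ (fun u _ => cancel u)
    (fun u _ => cancel u) (fun u _ => by rw [cancel])
  all_goals
    intro u hu
    simp only [Finset.mem_filter, Finset.mem_univ, true_and, not_lt, cancel] at hu ⊢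
    have := cs.length_mul_simple_ne u i
    omega

variable {R H : Type} [CommRing R] [Ring H] [Algebra R H] {b : Module.Basis W R H}

theorem basis_mul_simple_of_lt
    (hmul : ∀ w w' : W, cs.length (w * w') = cs.length w + cs.length w' →
      b w * b w' = b (w * w'))
    {i : B} {u : W} (hu : cs.length u < cs.length (u * cs.simple i)) :
    b u * b (cs.simple i) = b (u * cs.simple i) :=
  hmul u _ <| by
    rw [cs.length_simple]
    have := cs.length_mul_simple u i
    omega

theorem constr_mul_simple
    (hmul : ∀ w w' : W, cs.length (w * w') = cs.length w + cs.length w' →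
      b w * b w' = b (w * w'))
    {c : R} {i : B}
    (hquad : b (cs.simple i) * b (cs.simple i) = (c - 1) • b (cs.simple i) + c • 1)
    (g : W → H)
    (hg : ∀ u, cs.length u < cs.length (u * cs.simple i) →
      g (u * cs.simple i) = g u * b (cs.simple i))
    (a : H) :
    b.constr R g (a * b (cs.simple i)) = b.constr R g a * b (cs.simple i) := by
  set T := b (cs.simple i)
  suffices (b.constr R g).comp (LinearMap.mulRight R T) =
      (LinearMap.mulRight R T).comp (b.constr R g) from LinearMap.congr_fun this a
  refine b.ext fun u => ?_
  simp only [LinearMap.comp_apply, LinearMap.mulRight_apply, Module.Basis.constr_basis]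
  by_cases hu : cs.length u < cs.length (u * cs.simple i)
  · rw [basis_mul_simple_of_lt cs hmul hu, Module.Basis.constr_basis, hg u hu]
  · obtain ⟨v, rfl⟩ : ∃ v, v * cs.simple i = u :=
      ⟨u * cs.simple i, cs.simple_mul_simple_cancel_right i⟩
    rw [cs.simple_mul_simple_cancel_right] at hu
    have hv : cs.length v < cs.length (v * cs.simple i) := by
      have := cs.length_mul_simple_ne v i
      omega
    have hbu : b (v * cs.simple i) = b v * T := (basis_mul_simple_of_lt cs hmul hv).symm
    rw [hbu, hg v hv]
    calc b.constr R g (b v * T * T) = b.constr R g ((c - 1) • (b v * T) + c • b v) := by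
          rw [mul_assoc, hquad, mul_add, mul_smul_comm, mul_smul_comm, mul_one]
      _ = (c - 1) • (g v * T) + c • g v := by
          rw [map_add, map_smul, map_smul, ← hbu, Module.Basis.constr_basis,
            Module.Basis.constr_basis, hg v hv]
      _ = g v * T * T := by
          rw [mul_assoc, hquad, mul_add, mul_smul_comm, mul_smul_comm, mul_one]

theorem add_mul_eq_zero_of_sum_tmul_mem_Ns [Fintype W]
    (hmul : ∀ w w' : W, cs.length (w * w') = cs.length w + cs.length w' →
      b w * b w' = b (w * w'))
    {c : R} {i : B}
    (hquad : b (cs.simple i) * b (cs.simple i) = (c - 1) • b (cs.simple i) + c • 1)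
    (x : W → H) (hx : ∑ u, b u ⊗ₜ[R] x u ∈ Ns R H (b (cs.simple i)))
    {w : W} (hw : cs.length w < cs.length (w * cs.simple i)) :
    x w + b (cs.simple i) * x (w * cs.simple i) = 0 := by
  set T := b (cs.simple i)
  have hne : w * cs.simple i ≠ w := fun h => (cs.length_mul_simple_ne w i) (congrArg _ h)
  set g : W → H := Pi.single w 1 + Pi.single (w * cs.simple i) T
  have hg (u : W) (hu : cs.length u < cs.length (u * cs.simple i)) :
      g (u * cs.simple i) = g u * T := by
    by_cases huw : u = w
    · subst huw
      simp [g, hne]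
    · have h1 : u * cs.simple i ≠ w := by
        rintro rfl
        rw [cs.simple_mul_simple_cancel_right] at hw
        omega
      have h2 : u * cs.simple i ≠ w * cs.simple i := fun h => huw (mul_right_cancel h)
      have h3 : u ≠ w * cs.simple i := by
        rintro rfl
        rw [cs.simple_mul_simple_cancel_right] at hu
        omega
      simp [g, h1, h2, h3, huw]
  have := Ns_le_ker_lift_mul_comp (b.constr R g) (constr_mul_simple cs hmul hquad g hg) hx
  simpa [g, map_sum, Pi.single_apply, add_mul, Finset.sum_add_distrib] using this

theorem sum_tmul_mem_Ns_of_add_mul_eq_zero [Fintype W]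
    (hmul : ∀ w w' : W, cs.length (w * w') = cs.length w + cs.length w' →
      b w * b w' = b (w * w'))
    {i : B} (x : W → H)
    (hx : ∀ w, cs.length w < cs.length (w * cs.simple i) →
      x w + b (cs.simple i) * x (w * cs.simple i) = 0) :
    ∑ u, b u ⊗ₜ[R] x u ∈ Ns R H (b (cs.simple i)) := by
  rw [sum_eq_sum_ascents cs _ i]
  refine Submodule.sum_mem _ fun u hu => ?_
  replace hu : cs.length u < cs.length (u * cs.simple i) := (Finset.mem_filter.mp hu).2
  have hsplit : b u ⊗ₜ[R] x u + b (u * cs.simple i) ⊗ₜ[R] x (u * cs.simple i) =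
      ((b u * b (cs.simple i)) ⊗ₜ[R] x (u * cs.simple i) -
        b u ⊗ₜ[R] (b (cs.simple i) * x (u * cs.simple i))) +
      b u ⊗ₜ[R] (x u + b (cs.simple i) * x (u * cs.simple i)) := by
    rw [basis_mul_simple_of_lt cs hmul hu, TensorProduct.tmul_add]
    abel
  rw [hsplit, hx u hu, TensorProduct.tmul_zero, add_zero]
  exact mul_tmul_sub_tmul_mul_mem_Ns _ _ _

theorem sum_tmul_mem_Ns_iff [Fintype W]
    (hmul : ∀ w w' : W, cs.length (w * w') = cs.length w + cs.length w' →
      b w * b w' = b (w * w'))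
    {c : R} {i : B}
    (hquad : b (cs.simple i) * b (cs.simple i) = (c - 1) • b (cs.simple i) + c • 1)
    (x : W → H) :
    ∑ u, b u ⊗ₜ[R] x u ∈ Ns R H (b (cs.simple i)) ↔
      ∀ w, cs.length w < cs.length (w * cs.simple i) →
        x w + b (cs.simple i) * x (w * cs.simple i) = 0 :=
  ⟨fun hx _ => add_mul_eq_zero_of_sum_tmul_mem_Ns cs hmul hquad x hx,
    sum_tmul_mem_Ns_of_add_mul_eq_zero cs hmul x⟩

end Coxeter

end OkuyamaHecke

theorem okuyama_statement12_general
    {B : Type} {W : Type} [Group W] [Fintype W] {M : CoxeterMatrix B}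
    (cs : CoxeterSystem M W)
    (R : Type) [CommRing R] (H : Type) [Ring H] [Algebra R H]
    (q : B → Rˣ)
    (h : W → H) (bW : Module.Basis W R H) (hbW : ∀ w : W, bW w = h w)
    (hmul : ∀ w w' : W, cs.length (w * w') = cs.length w + cs.length w' →
        h w * h w' = h (w * w'))
    (hquad : ∀ s : B, h (cs.simple s) * h (cs.simple s) =
        ((q s : R) - 1) • h (cs.simple s) + (q s : R) • (1 : H))
    (x_ : W → H) (s : B) :
    (∑ w : W, h w ⊗ₜ[R] x_ w) ∈ Ns R H (h (cs.simple s)) ↔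
      ∀ w : W, cs.length (w * cs.simple s) > cs.length w →
        x_ (w * cs.simple s) = -(Ring.inverse (h (cs.simple s)) * x_ w) := by
  obtain rfl : h = bW := funext fun w => (hbW w).symm
  rw [sum_tmul_mem_Ns_iff cs hmul (hquad s)]
  have hunit := isUnit_of_mul_self_eq_smul_add_smul (hquad s)
  simp only [add_mul_eq_zero_iff_eq_neg_inverse_mul hunit, gt_iff_lt]

/-- Remark 18 of [Cabanes, On Okuyama's theorems about
Alvis-Curtis duality].  For `x = Σ_w h_w ⊗ x_w ∈ H ⊗_R H` and `s ∈ S`, one has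
`x ∈ N_s` if and only if `x_{ws} = -h_s⁻¹ x_w` whenever `ℓ(ws) > ℓ(w)`. -/
theorem okuyama_statement12
    {B : Type} {W : Type} [Group W] [Fintype W] {M : CoxeterMatrix B}
    (cs : CoxeterSystem M W)
    (R : Type) [CommRing R] (H : Type) [Ring H] [Algebra R H]
    (q : B → Rˣ)
    (hq : ∀ s t : B, IsConj (cs.simple s) (cs.simple t) → q s = q t)
    (h : W → H) (bW : Module.Basis W R H) (hbW : ∀ w : W, bW w = h w)
    (h1 : h 1 = 1)
    (hmul : ∀ w w' : W, cs.length (w * w') = cs.length w + cs.length w' →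
        h w * h w' = h (w * w'))
    (hquad : ∀ s : B, h (cs.simple s) * h (cs.simple s) =
        ((q s : R) - 1) • h (cs.simple s) + (q s : R) • (1 : H))
    (hunit : ∀ w : W, IsUnit (h w))
    (x_ : W → H) (s : B) :
    (∑ w : W, h w ⊗ₜ[R] x_ w) ∈ Ns R H (h (cs.simple s)) ↔
      ∀ w : W, cs.length (w * cs.simple s) > cs.length w →
        x_ (w * cs.simple s) = -(Ring.inverse (h (cs.simple s)) * x_ w) :=
  okuyama_statement12_general cs R H q h bW hbW hmul hquad x_ s
end

section
/- Suppose α : H → H is an R-algebra homomorphism with α(h_s) = −q_s·h_s⁻¹ for all s ∈ S. Then for every h ∈ H one has, in H ⊗_R H: Σ_{w∈W} (−1)^{ℓ(w)} (h·h_w) ⊗ h_w⁻¹ = Σ_{w∈W} (−1)^{ℓ(w)} h_w ⊗ (h_w⁻¹·α(h)). Equivalently, with ξ := Σ_{w∈W} (−1)^{ℓ(w)} h_w ⊗ h_w⁻¹, left multiplication by h on the first tensor factor of ξ coincides with right multiplication by α(h) on the second tensor factor of ξ (so the sub-bimodule ξ·H of H ⊗_R H is isomorphic, as an (H,H)-bimodule,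 to H with left action twisted by α). -/
/-!
The elements `a` with `(a ⊗ 1) ξ = ξ (1 ⊗ α a)` form a subalgebra of `H`, and the `h_s` generate
`H` as an algebra, so it suffices to treat `a = h_s`. The quadratic relation gives
`α h_s = (q_s - 1) - h_s`, and then the defect `t ↦ (h_s ⊗ 1) t - t (1 ⊗ α h_s)` takes the same value
on `h_w ⊗ h_w⁻¹` and on `h_{sw} ⊗ h_{sw}⁻¹`. These two terms of `ξ` carry opposite signs, so the
defect of `ξ` cancels in pairs.
-/

open scoped TensorProduct
open Algebra.TensorProduct (includeLeft includeRight)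

namespace AlgHom

variable {R A B : Type*} [CommSemiring R] [Semiring A] [Semiring B] [Algebra R A] [Algebra R B]

def intertwiningSubalgebra (f g : A →ₐ[R] B) (x : B) : Subalgebra R A where
  carrier := {a | f a * x = x * g a}
  mul_mem' {a b} ha hb := by
    simp only [Set.mem_ofPred_eq, map_mul] at *
    rw [mul_assoc, hb, ← mul_assoc, ha, mul_assoc]
  add_mem' {a b} ha hb := by
    simp only [Set.mem_ofPred_eq, map_add] at *
    rw [add_mul, mul_add, ha, hb]
  algebraMap_mem' r := by
    simp only [Set.mem_ofPred_eq, AlgHom.commutes]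
    exact Algebra.commutes r x

theorem mem_intertwiningSubalgebra {f g : A →ₐ[R] B} {x : B} {a : A} :
    a ∈ f.intertwiningSubalgebra g x ↔ f a * x = x * g a := Iff.rfl

end AlgHom

section QuadraticUnit

variable {R H : Type*} [CommRing R] [Ring H] [Algebra R H] {q : R} {s : Hˣ}

theorem Units.smul_inv_eq_of_quadratic (hs : (s * s : H) = (q - 1) • (s : H) + q • 1) :
    q • (↑s⁻¹ : H) = s - (q - 1) • 1 := by
  have := congrArg (· * (↑s⁻¹ : H)) hs
  simp only [mul_assoc, Units.mul_inv, mul_one, add_mul, smul_mul_assoc, one_mul] at this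
  rw [this]; abel

variable (R) in
def tensorDefect (a b : H) : H ⊗[R] H →ₗ[R] H ⊗[R] H :=
  LinearMap.mulLeft R (a ⊗ₜ[R] (1 : H)) - LinearMap.mulRight R ((1 : H) ⊗ₜ[R] b)

theorem tensorDefect_apply (a b : H) (t : H ⊗[R] H) :
    tensorDefect R a b t = includeLeft (S := R) a * t - t * includeRight b := rfl

theorem tensorDefect_tmul (a b x y : H) :
    tensorDefect R a b (x ⊗ₜ y) = (a * x) ⊗ₜ y - x ⊗ₜ (y * b) := by
  simp [tensorDefect, Algebra.TensorProduct.tmul_mul_tmul]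

theorem tensorDefect_tmul_inv_simple_mul (hs : (s * s : H) = (q - 1) • (s : H) + q • 1)
    (x : Hˣ) :
    tensorDefect R (s : H) ((q - 1) • 1 - s) ((x : H) ⊗ₜ (↑x⁻¹ : H)) =
      tensorDefect R (s : H) ((q - 1) • 1 - s) (↑(s * x) ⊗ₜ (↑(s * x)⁻¹ : H)) := by
  have hss : (s : H) * ↑(s * x) = (q - 1) • ↑(s * x) + q • (x : H) := by
    rw [Units.val_mul, ← mul_assoc, hs, add_mul, smul_mul_assoc, smul_mul_assoc, one_mul]
  have hinv : (↑x⁻¹ : H) * ((q - 1) • 1 - s) = -(q • ↑(s * x)⁻¹) := by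
    rw [mul_inv_rev, Units.val_mul, ← mul_smul_comm, Units.smul_inv_eq_of_quadratic hs]
    simp only [mul_sub]; abel
  have hinv' : (↑(s * x)⁻¹ : H) * ((q - 1) • 1 - s) = (q - 1) • ↑(s * x)⁻¹ - ↑x⁻¹ := by
    rw [mul_sub, mul_smul_comm, mul_one, mul_inv_rev, Units.val_mul, mul_assoc,
      Units.inv_mul, mul_one]
  rw [tensorDefect_tmul, tensorDefect_tmul, hss, hinv, hinv', ← Units.val_mul]
  simp only [TensorProduct.add_tmul, TensorProduct.tmul_sub, TensorProduct.tmul_neg,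
    TensorProduct.smul_tmul', TensorProduct.tmul_smul]
  abel

end QuadraticUnit

namespace CoxeterSystem

variable {B W : Type*} [Group W] {M : CoxeterMatrix B} (cs : CoxeterSystem M W)
  {R H : Type*} [CommRing R] [Ring H] [Algebra R H] {h : W → H}

theorem hecke_simple_mul
    (hmul : ∀ w w' : W, cs.length (w * w') = cs.length w + cs.length w' →
      h w * h w' = h (w * w'))
    {i : B} {w : W} (hlen : cs.length (cs.simple i * w) = cs.length w + 1) :
    h (cs.simple i) * h w = h (cs.simple i * w) :=
  hmul _ _ (by rw [hlen, cs.length_simple, add_comm])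

theorem hecke_mem_adjoin_simple (h1 : h 1 = 1)
    (hmul : ∀ w w' : W, cs.length (w * w') = cs.length w + cs.length w' →
      h w * h w' = h (w * w')) (w : W) :
    h w ∈ Algebra.adjoin R (Set.range fun i => h (cs.simple i)) := by
  induction hn : cs.length w using Nat.strong_induction_on generalizing w with
  | _ n ih =>
    obtain rfl | hw1 := eq_or_ne w 1
    · rw [h1]; exact one_mem _
    obtain ⟨i, hi⟩ := cs.exists_leftDescent_of_ne_one hw1
    have hlen :
        cs.length (cs.simple i * (cs.simple i * w)) = cs.length (cs.simple i * w) + 1 := by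
      rw [cs.simple_mul_simple_cancel_left]; exact (cs.isLeftDescent_iff.mp hi).symm
    rw [← cs.simple_mul_simple_cancel_left i (w := w), ← cs.hecke_simple_mul hmul hlen]
    exact mul_mem (Algebra.subset_adjoin ⟨i, rfl⟩) (ih _ (hn ▸ hi) _ rfl)

theorem hecke_adjoin_simple_eq_top (h1 : h 1 = 1)
    (hmul : ∀ w w' : W, cs.length (w * w') = cs.length w + cs.length w' →
      h w * h w' = h (w * w'))
    (hspan : Submodule.span R (Set.range h) = ⊤) :
    Algebra.adjoin R (Set.range fun i => h (cs.simple i)) = ⊤ := by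
  refine Algebra.eq_top_iff.mpr fun a => ?_
  have hle : Submodule.span R (Set.range h) ≤
      Subalgebra.toSubmodule (Algebra.adjoin R (Set.range fun i => h (cs.simple i))) :=
    Submodule.span_le.mpr <| Set.range_subset_iff.mpr <| cs.hecke_mem_adjoin_simple h1 hmul
  exact hle (hspan ▸ Submodule.mem_top)

variable [Fintype W]

variable (R h) in
noncomputable def alternatingInverseTensor : H ⊗[R] H :=
  ∑ w : W, ((-1 : ℤ) ^ cs.length w) • (h w ⊗ₜ[R] Ring.inverse (h w))

theorem tensorDefect_alternatingInverseTensor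
    (hmul : ∀ w w' : W, cs.length (w * w') = cs.length w + cs.length w' →
      h w * h w' = h (w * w'))
    (hunit : ∀ w : W, IsUnit (h w)) {i : B} {q : R}
    (hquad : h (cs.simple i) * h (cs.simple i) = (q - 1) • h (cs.simple i) + q • 1) :
    tensorDefect R (h (cs.simple i)) ((q - 1) • 1 - h (cs.simple i))
      (cs.alternatingInverseTensor R h) = 0 := by
  set D := tensorDefect R (h (cs.simple i)) ((q - 1) • 1 - h (cs.simple i))
  have hpair : ∀ w, cs.length (cs.simple i * w) = cs.length w + 1 →
      D (h w ⊗ₜ Ring.inverse (h w)) =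
        D (h (cs.simple i * w) ⊗ₜ Ring.inverse (h (cs.simple i * w))) := by
    intro w hlen
    obtain ⟨u, hu⟩ := hunit (cs.simple i)
    obtain ⟨v, hv⟩ := hunit w
    have huv : ((u * v : Hˣ) : H) = h (cs.simple i * w) := by
      rw [Units.val_mul, hu, hv, cs.hecke_simple_mul hmul hlen]
    have := tensorDefect_tmul_inv_simple_mul (s := u) (hu ▸ hquad) v
    rwa [← Ring.inverse_unit, ← Ring.inverse_unit, huv, hv, hu] at this
  have hsign : ∀ w, cs.length (cs.simple i * w) = cs.length w + 1 →
      (-1 : ℤ) ^ cs.length (cs.simple i * w) = -(-1) ^ cs.length w := by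
    intro w hlen
    rw [hlen, pow_succ, mul_neg_one]
  unfold alternatingInverseTensor
  simp only [map_sum, map_zsmul]
  refine Finset.sum_ninvolution (cs.simple i * ·) (fun w => ?_) (fun w _ hw => ?_)
    (fun _ => Finset.mem_univ _) (fun _ => cs.simple_mul_simple_cancel_left i)
  · rcases cs.length_simple_mul w i with hlen | hlen
    · rw [hpair w hlen, hsign w hlen, neg_smul, add_neg_cancel]
    · have hlen' :
          cs.length (cs.simple i * (cs.simple i * w)) = cs.length (cs.simple i * w) + 1 := by
        rw [cs.simple_mul_simple_cancel_left]; exact hlen.symm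
      have hp := hpair _ hlen'
      have hs := hsign _ hlen'
      rw [cs.simple_mul_simple_cancel_left] at hp hs
      rw [hp, hs, neg_smul, neg_add_cancel]
  · have hsi : cs.simple i = 1 := mul_right_cancel (hw.trans (one_mul w).symm)
    simpa [cs.length_simple] using congrArg cs.length hsi

end CoxeterSystem

theorem okuyama_statement19_general
    {B : Type} {W : Type} [Group W] [Fintype W] {M : CoxeterMatrix B}
    (cs : CoxeterSystem M W)
    (R : Type) [CommRing R] (H : Type) [Ring H] [Algebra R H]
    (q : B → Rˣ)
    (h : W → H) (bW : Module.Basis W R H) (hbW : ∀ w : W, bW w = h w)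
    (h1 : h 1 = 1)
    (hmul : ∀ w w' : W, cs.length (w * w') = cs.length w + cs.length w' →
        h w * h w' = h (w * w'))
    (hquad : ∀ s : B, h (cs.simple s) * h (cs.simple s) =
        ((q s : R) - 1) • h (cs.simple s) + (q s : R) • (1 : H))
    (hunit : ∀ w : W, IsUnit (h w))
    (α : H →ₐ[R] H)
    (hα : ∀ s : B, α (h (cs.simple s)) = -((q s : R) • Ring.inverse (h (cs.simple s)))) :
    ∀ hh : H,
      ∑ w : W, ((-1 : ℤ) ^ cs.length w) • ((hh * h w) ⊗ₜ[R] Ring.inverse (h w))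
        = ∑ w : W, ((-1 : ℤ) ^ cs.length w) • (h w ⊗ₜ[R] (Ring.inverse (h w) * α hh)) := by
  intro hh
  set S := (includeLeft : H →ₐ[R] H ⊗[R] H).intertwiningSubalgebra (includeRight.comp α)
    (cs.alternatingInverseTensor R h)
  have hsimple : ∀ i, h (cs.simple i) ∈ S := by
    intro i
    obtain ⟨u, hu⟩ := hunit (cs.simple i)
    have hαi : α (h (cs.simple i)) = ((q i : R) - 1) • 1 - h (cs.simple i) := by
      rw [hα, ← hu, Ring.inverse_unit, Units.smul_inv_eq_of_quadratic (hu ▸ hquad i), neg_sub]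
    rw [AlgHom.mem_intertwiningSubalgebra, ← sub_eq_zero, AlgHom.comp_apply, hαi,
      ← tensorDefect_apply]
    exact cs.tensorDefect_alternatingInverseTensor hmul hunit (hquad i)
  have hspan : Submodule.span R (Set.range h) = ⊤ := funext hbW ▸ bW.span_eq
  have hS : S = ⊤ := by
    rw [eq_top_iff, ← cs.hecke_adjoin_simple_eq_top h1 hmul hspan]
    exact Algebra.adjoin_le (Set.range_subset_iff.mpr hsimple)
  have hmem : hh ∈ S := hS ▸ Algebra.mem_top
  rw [AlgHom.mem_intertwiningSubalgebra] at hmem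
  simpa only [CoxeterSystem.alternatingInverseTensor, Finset.mul_sum, Finset.sum_mul,
    mul_smul_comm, smul_mul_assoc, Algebra.TensorProduct.includeLeft_apply, AlgHom.comp_apply,
    Algebra.TensorProduct.includeRight_apply, Algebra.TensorProduct.tmul_mul_tmul, one_mul,
    mul_one] using hmem

/-- Remark 18 of [Cabanes, On Okuyama's theorems about
Alvis-Curtis duality].  If `α` is an `R`-algebra endomorphism of the
Iwahori–Hecke algebra `H` with `α(h_s) = -q_s h_s⁻¹` for all `s ∈ S`, then for
every `h ∈ H` one has `h·ξ = ξ·α(h)` where `ξ = Σ_w (-1)^{ℓ(w)} h_w ⊗ h_w⁻¹`,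
i.e. left multiplication by `h` on the first factors of `ξ` agrees with right
multiplication by `α(h)` on the second factors. -/
theorem okuyama_statement19
    {B : Type} {W : Type} [Group W] [Fintype W] {M : CoxeterMatrix B}
    (cs : CoxeterSystem M W)
    (R : Type) [CommRing R] (H : Type) [Ring H] [Algebra R H]
    (q : B → Rˣ)
    (hq : ∀ s t : B, IsConj (cs.simple s) (cs.simple t) → q s = q t)
    (h : W → H) (bW : Module.Basis W R H) (hbW : ∀ w : W, bW w = h w)
    (h1 : h 1 = 1)
    (hmul : ∀ w w' : W, cs.length (w * w') = cs.length w + cs.length w' →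
        h w * h w' = h (w * w'))
    (hquad : ∀ s : B, h (cs.simple s) * h (cs.simple s) =
        ((q s : R) - 1) • h (cs.simple s) + (q s : R) • (1 : H))
    (hunit : ∀ w : W, IsUnit (h w))
    (α : H →ₐ[R] H)
    (hα : ∀ s : B, α (h (cs.simple s)) = -((q s : R) • Ring.inverse (h (cs.simple s)))) :
    ∀ hh : H,
      ∑ w : W, ((-1 : ℤ) ^ cs.length w) • ((hh * h w) ⊗ₜ[R] Ring.inverse (h w))
        = ∑ w : W, ((-1 : ℤ) ^ cs.length w) • (h w ⊗ₜ[R] (Ring.inverse (h w) * α hh)) :=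
  okuyama_statement19_general cs R H q h bW hbW h1 hmul hquad hunit α hα
end
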